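/- Let f be a C¹-diffeomorphism of S¹ with irrational rotation number, let ε > 0, and let [a,b] be a maximal wandering interval of f. Then there exists a family of diffeomorphisms h_i: f^i([a,b]) → f^i([a,b]), i ∈ ℤ, such that: there is n₀ with h_i equal to the identity of f^i([a,b]) for all |i| ≥ n₀; and for every i ∈ ℤ the distorsion of h_{i+1}∘f∘h_i⁻¹: f^i([a,b]) → f^{i+1}([a,b]) is bounded by ε. -/

import Mathlib

open Set Filter

/-- `inArc a w b` : the point `w` (mod 1) lies strictly inside the positively oriented
open arc of the circle `ℝ/ℤ` from `a` (mod 1) to `b` (mod 1). -/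
def inArc (a w b : ℝ) : Prop :=
  0 < Int.fract (w - a) ∧ Int.fract (w - a) < Int.fract (b - a)

/-- A lift of an orientation-preserving `C¹`-diffeomorphism of the circle `S¹ = ℝ/ℤ`:
a `C¹` map `F : ℝ → ℝ` with `F (x+1) = F x + 1` and `F' > 0` everywhere. -/
structure CircleDiffeo where
  toFun : ℝ → ℝ
  contDiff : ContDiff ℝ 1 toFun
  deriv_pos : ∀ x : ℝ, 0 < deriv toFun x
  commute_translation : ∀ x : ℝ, toFun (x + 1) = toFun x + 1

/-- `f` has rotation number (a lift of) `α`. -/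
def hasRotationNumber (f : CircleDiffeo) (α : ℝ) : Prop :=
  Tendsto (fun n : ℕ => f.toFun^[n] 0 / (n : ℝ)) atTop (nhds α)

/-- The `C¹`-distance between (lifts of) circle maps : sup distance between the maps
plus sup distance between the derivatives (computed over a fundamental domain). -/
noncomputable def distC1 (f g : ℝ → ℝ) : ℝ :=
  (⨆ x : Icc (0:ℝ) 1, |f x.1 - g x.1|) + (⨆ x : Icc (0:ℝ) 1, |deriv f x.1 - deriv g x.1|)

/-- An orientation-preserving `C¹` diffeomorphism of the interval `[u,v]` onto itself
(described by a map `ℝ → ℝ`). -/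
structure IsIntervalDiffeo (h : ℝ → ℝ) (u v : ℝ) : Prop where
  contDiffOn : ContDiffOn ℝ 1 h (Set.Icc u v)
  fix_left : h u = u
  fix_right : h v = v
  mono : StrictMonoOn h (Set.Icc u v)
  deriv_pos : ∀ w ∈ Set.Icc u v, 0 < derivWithin h (Set.Icc u v) w

/-- The `C¹` distance from a diffeomorphism of `[0,1]` to the identity. -/
noncomputable def distId (g : ℝ → ℝ) : ℝ :=
  (⨆ x : Set.Icc (0:ℝ) 1, |g x.1 - x.1|) +
    (⨆ x : Set.Icc (0:ℝ) 1, |derivWithin g (Set.Icc (0:ℝ) 1) x.1 - 1|)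

instance : Fact ((0:ℝ) < 1) := ⟨zero_lt_one⟩

/-- The circle homeomorphism induced on `S¹ = ℝ/ℤ` by (the lift) `f`. -/
noncomputable def CircleDiffeo.proj (f : CircleDiffeo) :
    AddCircle (1:ℝ) → AddCircle (1:ℝ) :=
  fun z => ((f.toFun (((AddCircle.equivIco 1 0) z : ℝ))) : AddCircle (1:ℝ))

/-- `M` is the (unique) minimal set of `T` : a nonempty closed invariant set with no
proper nonempty closed invariant subset. -/
def IsMinimalSet (T : AddCircle (1:ℝ) → AddCircle (1:ℝ)) (M : Set (AddCircle (1:ℝ))) : Prop :=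
  M.Nonempty ∧ IsClosed M ∧ T '' M ⊆ M ∧
    ∀ M' : Set (AddCircle (1:ℝ)), M' ⊆ M → M'.Nonempty → IsClosed M' → T '' M' ⊆ M' → M' = M

/-- The (open) arc `(u,v)` of the circle is a maximal wandering interval of `T` :
its image in `S¹` is a connected component of the complement of the minimal set `M`. -/
def IsWanderingArc (M : Set (AddCircle (1:ℝ))) (u v : ℝ) : Prop :=
  ∃ z ∈ Mᶜ, connectedComponentIn Mᶜ z = (fun t : ℝ => (t : AddCircle (1:ℝ))) '' Set.Ioo u v

/-- The `k`-th iterate (`k ∈ ℤ`) of a circle diffeomorphism with lift `F` and inverse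
lift `Finv`. -/
noncomputable def zIter (F Finv : ℝ → ℝ) (k : ℤ) : ℝ → ℝ :=
  if 0 ≤ k then F^[k.toNat] else Finv^[(-k).toNat]

/-!
Only finitely many of the intervals `Iᵢ = fⁱ([a,b])` are longer than a given `η > 0`: they
project to pairwise disjoint arcs of the circle (two of them coincide only if `f` has a periodic
point, which an irrational rotation number excludes), so their lengths are summable.

If `log hᵢ' = φᵢ` up to a constant, then `log (h_{i+1} ∘ f ∘ hᵢ⁻¹)' = φ_{i+1} ∘ f + log f' - φᵢ`
up to a constant. On a short interval `log f'` has small oscillation by uniform continuity. For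
each of the finitely many long intervals `I_j`, `φᵢ` contains `log f' ∘ f^{j-i}` with the weight
`(i + n₀) / (j + n₀)` for `-n₀ ≤ i ≤ j`: the drop of this weight from `1` to `0` between `i = j`
and `i = j + 1` cancels `log f'` on `I_j`, and every other step changes it by `1 / (j + n₀)`
only, which is small for `n₀` large.
-/

open Function CircleDeg1Lift MeasureTheory

namespace CircleDiffeo

variable (f : CircleDiffeo)

theorem strictMono : StrictMono f.toFun := strictMono_of_deriv_pos f.deriv_pos

theorem continuous : Continuous f.toFun := f.contDiff.continuous

def toLift : CircleDeg1Lift where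
  toFun := f.toFun
  monotone' := f.strictMono.monotone
  map_add_one' := f.commute_translation

theorem coe_toLift : ⇑f.toLift = f.toFun := rfl

theorem map_add_int (x : ℝ) (k : ℤ) : f.toFun (x + k) = f.toFun x + k :=
  f.toLift.map_add_int x k

theorem surjective : Surjective f.toFun :=
  f.toLift.continuous_iff_surjective.1 f.continuous

theorem image_Ioo (x y : ℝ) : f.toFun '' Ioo x y = Ioo (f.toFun x) (f.toFun y) :=
  (f.strictMono.orderIsoOfSurjective f.toFun f.surjective).image_Ioo x y

theorem translationNumber_toLift {α : ℝ} (hf : hasRotationNumber f α) :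
    translationNumber f.toLift = α := by
  refine tendsto_nhds_unique ?_ hf
  simpa only [coe_pow, coe_toLift] using f.toLift.tendsto_translation_number₀

theorem iterate_ne_add_int {α : ℝ} (hα : Irrational α) (hf : hasRotationNumber f α) {n : ℕ}
    (hn : 0 < n) (x : ℝ) (m : ℤ) : f.toFun^[n] x ≠ x + m := by
  intro h
  have hτ := f.toLift.translationNumber_of_map_pow_eq_add_int (by rwa [coe_pow]) hn
  rw [translationNumber_toLift f hf] at hτ
  exact hα ⟨m / n, by push_cast; exact hτ.symm⟩

theorem proj_coe (x : ℝ) : f.proj x = (f.toFun x : AddCircle (1:ℝ)) := by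
  rw [CircleDiffeo.proj, AddCircle.coe_equivIco_mk_apply, div_one, mul_one, Int.fract,
    sub_eq_add_neg, ← Int.cast_neg, f.map_add_int]
  simp

theorem continuous_proj : Continuous f.proj := by
  rw [(QuotientAddGroup.isQuotientMap_mk _).continuous_iff]
  exact (AddCircle.continuous_mk' 1).comp f.continuous |>.congr fun x => (f.proj_coe x).symm

theorem apply_inv_apply {finv : CircleDiffeo} (hfinv : ∀ x, finv.toFun (f.toFun x) = x) (x : ℝ) :
    f.toFun (finv.toFun x) = x := by
  obtain ⟨y, rfl⟩ := f.surjective x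
  rw [hfinv]

noncomputable def projHomeomorph (finv : CircleDiffeo) (hfinv : ∀ x, finv.toFun (f.toFun x) = x) :
    AddCircle (1:ℝ) ≃ₜ AddCircle (1:ℝ) where
  toFun := f.proj
  invFun := finv.proj
  left_inv z := by
    induction z using QuotientAddGroup.induction_on
    rw [f.proj_coe, finv.proj_coe, hfinv]
  right_inv z := by
    induction z using QuotientAddGroup.induction_on
    rw [finv.proj_coe, f.proj_coe, f.apply_inv_apply hfinv]
  continuous_toFun := f.continuous_proj
  continuous_invFun := finv.continuous_proj

end CircleDiffeo

section zIter

variable {F Finv : ℝ → ℝ}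

theorem zIter_succ (h : ∀ x, F (Finv x) = x) (i : ℤ) (x : ℝ) :
    zIter F Finv (i + 1) x = F (zIter F Finv i x) := by
  unfold zIter
  rcases le_or_gt 0 i with hi | hi
  · rw [if_pos hi, if_pos (by omega), show (i + 1).toNat = i.toNat + 1 by omega,
      Function.iterate_succ_apply']
  · rw [if_neg (by omega : ¬ 0 ≤ i), show (-i).toNat = (-(i + 1)).toNat + 1 by omega,
      Function.iterate_succ_apply', h]
    split_ifs
    · rw [show (i + 1).toNat = 0 by omega, show (-(i + 1)).toNat = 0 by omega]; rfl
    · rfl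

theorem zIter_add_nat (h : ∀ x, F (Finv x) = x) (i : ℤ) (n : ℕ) (x : ℝ) :
    zIter F Finv (i + n) x = F^[n] (zIter F Finv i x) := by
  induction n with
  | zero => simp
  | succ n ih => rw [Nat.cast_succ, ← add_assoc, zIter_succ h, ih, Function.iterate_succ_apply']

theorem zIter_strictMono (hF : StrictMono F) (hFinv : StrictMono Finv) (i : ℤ) :
    StrictMono (zIter F Finv i) := by
  unfold zIter
  split
  exacts [hF.iterate _, hFinv.iterate _]

theorem zIter_add_one (hF : ∀ x, F (x + 1) = F x + 1) (hFinv : ∀ x, Finv (x + 1) = Finv x + 1)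
    (i : ℤ) (x : ℝ) : zIter F Finv i (x + 1) = zIter F Finv i x + 1 := by
  unfold zIter
  split
  exacts [Function.Commute.iterate_left (f := F) (g := (· + 1)) hF _ x,
    Function.Commute.iterate_left (f := Finv) (g := (· + 1)) hFinv _ x]

end zIter

def openArc (u v : ℝ) : Set (AddCircle (1:ℝ)) :=
  (fun t : ℝ => (t : AddCircle (1:ℝ))) '' Ioo u v

section openArc

variable {u v u' v' : ℝ}

theorem coe_add_intCast (x : ℝ) (k : ℤ) : ((x + k : ℝ) : AddCircle (1:ℝ)) = x := by
  rw [AddCircle.coe_add, add_eq_left, AddCircle.coe_eq_zero_iff]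
  exact ⟨k, by simp⟩

theorem coe_mem_openArc {x : ℝ} :
    (x : AddCircle (1:ℝ)) ∈ openArc u v ↔ ∃ k : ℤ, x + k ∈ Ioo u v := by
  constructor
  · rintro ⟨y, hy, hyx : (y : AddCircle (1:ℝ)) = x⟩
    obtain ⟨k, hk⟩ := (AddCircle.coe_eq_zero_iff 1).1 (by rw [AddCircle.coe_sub, hyx, sub_self] :
      ((y - x : ℝ) : AddCircle (1:ℝ)) = 0)
    refine ⟨k, ?_⟩
    rw [zsmul_eq_mul, mul_one] at hk
    rwa [hk, add_sub_cancel]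
  · rintro ⟨k, hk⟩
    exact ⟨x + k, hk, coe_add_intCast x k⟩

theorem coe_notMem_openArc (h : v ≤ u + 1) : (u : AddCircle (1:ℝ)) ∉ openArc u v := by
  rintro hu
  obtain ⟨k, hk₁, hk₂⟩ := coe_mem_openArc.1 hu
  have h₀ : (0 : ℤ) < k := by exact_mod_cast (show (0:ℝ) < k by linarith)
  have h₁ : k < (1 : ℤ) := by exact_mod_cast (show (k:ℝ) < 1 by linarith)
  omega

theorem exists_int_eq_add_of_openArc_eq (hv : v ≤ u + 1) (hu' : u' < v') (hv' : v' ≤ u' + 1)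
    (heq : openArc u v = openArc u' v') : ∃ k : ℤ, u' = u + k := by
  obtain ⟨k, hk₁, hk₂⟩ : ∃ k : ℤ, (u' + v') / 2 + k ∈ Ioo u v := by
    rw [← coe_mem_openArc, heq]
    exact ⟨_, ⟨by linarith, by linarith⟩, rfl⟩
  refine ⟨-k, ?_⟩
  push_cast
  rcases lt_trichotomy u' (u - k) with hlt | heq' | hgt
  · refine absurd ?_ (coe_notMem_openArc hv)
    rw [heq, ← coe_add_intCast u (-k)]
    exact ⟨_, ⟨by push_cast; linarith, by push_cast; linarith⟩, rfl⟩
  · linarith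
  · refine absurd ?_ (coe_notMem_openArc hv')
    rw [← heq, ← coe_add_intCast u' k]
    exact ⟨_, ⟨by linarith, by linarith⟩, rfl⟩

theorem isOpen_openArc : IsOpen (openArc u v) :=
  QuotientAddGroup.isOpenMap_coe _ isOpen_Ioo

theorem ofReal_sub_le_volume_openArc (h : v ≤ u + 1) :
    ENNReal.ofReal (v - u) ≤ volume (openArc u v) :=
  calc ENNReal.ofReal (v - u) = volume.restrict (Ioc u (u + 1)) (Ioo u v) := by
        rw [Measure.restrict_apply measurableSet_Ioo,
          inter_eq_left.2 (Ioo_subset_Ioc_self.trans (Ioc_subset_Ioc_right h)), Real.volume_Ioo]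
    _ ≤ volume.restrict (Ioc u (u + 1)) (QuotientAddGroup.mk ⁻¹' openArc u v) :=
        measure_mono (subset_preimage_image _ _)
    _ = volume (openArc u v) :=
        (AddCircle.measurePreserving_mk 1 u).measure_preimage
          isOpen_openArc.measurableSet.nullMeasurableSet

theorem finite_setOf_lt_sub_of_pairwise_disjoint {ι : Type*} {u v : ι → ℝ}
    (hv : ∀ i, v i ≤ u i + 1) (hdisj : Pairwise (Disjoint on fun i => openArc (u i) (v i)))
    {η : ℝ} (hη : 0 < η) : {i | η < v i - u i}.Finite :=
  (Measure.finite_const_le_meas_of_disjoint_iUnion volume (ENNReal.ofReal_pos.2 hη)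
    (fun _ => isOpen_openArc.measurableSet) hdisj (measure_ne_top _ _)).subset
    fun i hi => (ENNReal.ofReal_le_ofReal (le_of_lt hi)).trans (ofReal_sub_le_volume_openArc (hv i))

theorem CircleDiffeo.proj_image_openArc (f : CircleDiffeo) (u v : ℝ) :
    f.proj '' openArc u v = openArc (f.toFun u) (f.toFun v) := by
  rw [openArc, openArc, ← f.image_Ioo, image_image, image_image]
  exact image_congr fun x _ => f.proj_coe x

end openArc

theorem IsMinimalSet.image_eq {T : AddCircle (1:ℝ) → AddCircle (1:ℝ)} {M : Set (AddCircle (1:ℝ))}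
    (hM : IsMinimalSet T M) (hT : Continuous T) : T '' M = M := by
  obtain ⟨hne, hclosed, hinv, hmin⟩ := hM
  exact hmin _ hinv (hne.image T) (hclosed.isCompact.image hT).isClosed (image_mono hinv)

namespace IsWanderingArc

variable {M : Set (AddCircle (1:ℝ))} {u v u' v' : ℝ}

theorem of_image (Θ : AddCircle (1:ℝ) ≃ₜ AddCircle (1:ℝ)) (hΘ : Θ '' M = M)
    (h : IsWanderingArc M u v) (himage : Θ '' openArc u v = openArc u' v') :
    IsWanderingArc M u' v' := by
  obtain ⟨z, hz, hcomp : connectedComponentIn Mᶜ z = openArc u v⟩ := h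
  have hcompl : Θ '' Mᶜ = Mᶜ := by rw [image_compl_eq Θ.bijective, hΘ]
  refine ⟨Θ z, hcompl ▸ mem_image_of_mem Θ hz, (?_ : _ = openArc u' v')⟩
  rw [← himage, ← hcomp, Θ.image_connectedComponentIn hz, hcompl]

theorem eq_of_not_disjoint (h : IsWanderingArc M u v) (h' : IsWanderingArc M u' v')
    (hnd : ¬ Disjoint (openArc u v) (openArc u' v')) : openArc u v = openArc u' v' := by
  obtain ⟨z, -, hz : connectedComponentIn Mᶜ z = openArc u v⟩ := h
  obtain ⟨z', -, hz' : connectedComponentIn Mᶜ z' = openArc u' v'⟩ := h'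
  obtain ⟨p, hp, hp'⟩ := not_disjoint_iff.1 hnd
  rw [← hz] at hp ⊢
  rw [← hz'] at hp' ⊢
  rw [connectedComponentIn_eq hp, connectedComponentIn_eq hp']

end IsWanderingArc

theorem zIter_lt_add_one (f finv : CircleDiffeo) {a b : ℝ} (hab1 : b < a + 1) (i : ℤ) :
    zIter f.toFun finv.toFun i b < zIter f.toFun finv.toFun i a + 1 := by
  rw [← zIter_add_one f.commute_translation finv.commute_translation]
  exact zIter_strictMono f.strictMono finv.strictMono i hab1

section WanderingOrbit

variable {f finv : CircleDiffeo} (hfinv : ∀ x, finv.toFun (f.toFun x) = x) {a b : ℝ}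
include hfinv

theorem zIter_succ_of_inv (i : ℤ) (x : ℝ) :
    zIter f.toFun finv.toFun (i + 1) x = f.toFun (zIter f.toFun finv.toFun i x) :=
  zIter_succ (f.apply_inv_apply hfinv) i x

theorem isWanderingArc_zIter {M : Set (AddCircle (1:ℝ))} (hM : IsMinimalSet f.proj M)
    (hwand : IsWanderingArc M a b) (i : ℤ) :
    IsWanderingArc M (zIter f.toFun finv.toFun i a) (zIter f.toFun finv.toFun i b) := by
  set Θ := f.projHomeomorph finv hfinv
  have hΘM : Θ '' M = M := hM.image_eq f.continuous_proj
  have hΘsymmM : Θ.symm '' M = M := by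
    nth_rewrite 1 [← hΘM]
    exact Θ.symm_image_image M
  have hstep : ∀ i : ℤ, Θ '' openArc (zIter f.toFun finv.toFun i a) (zIter f.toFun finv.toFun i b)
      = openArc (zIter f.toFun finv.toFun (i + 1) a) (zIter f.toFun finv.toFun (i + 1) b) :=
    fun i => by
      rw [zIter_succ_of_inv hfinv, zIter_succ_of_inv hfinv]
      exact f.proj_image_openArc _ _
  induction i using Int.induction_on with
  | zero => exact hwand
  | succ i ih => exact ih.of_image Θ hΘM (hstep i)
  | pred i ih =>
    refine ih.of_image Θ.symm hΘsymmM ?_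
    have hprev := hstep (-i - 1)
    rw [sub_add_cancel] at hprev
    rw [← hprev]
    exact Θ.symm_image_image _

theorem openArc_zIter_injective {α : ℝ} (hα : Irrational α) (hf : hasRotationNumber f α)
    (hab : a < b) (hab1 : b < a + 1) :
    Injective fun i : ℤ =>
      openArc (zIter f.toFun finv.toFun i a) (zIter f.toFun finv.toFun i b) := by
  have hshort i := (zIter_lt_add_one f finv hab1 i).le
  refine Injective.of_lt_imp_ne fun i j hij heq => ?_
  obtain ⟨n, rfl⟩ : ∃ n : ℕ, j = i + n := ⟨(j - i).toNat, by omega⟩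
  obtain ⟨m, hm⟩ := exists_int_eq_add_of_openArc_eq (hshort i)
    (zIter_strictMono f.strictMono finv.strictMono _ hab) (hshort _) heq
  rw [zIter_add_nat (f.apply_inv_apply hfinv)] at hm
  exact f.iterate_ne_add_int hα hf (by omega) _ m hm

theorem finite_setOf_lt_zIter_sub {α : ℝ} (hα : Irrational α) (hf : hasRotationNumber f α)
    (hab : a < b) (hab1 : b < a + 1) {M : Set (AddCircle (1:ℝ))} (hM : IsMinimalSet f.proj M)
    (hwand : IsWanderingArc M a b) {η : ℝ} (hη : 0 < η) :
    {j : ℤ | η < zIter f.toFun finv.toFun j b - zIter f.toFun finv.toFun j a}.Finite := by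
  refine finite_setOf_lt_sub_of_pairwise_disjoint (fun i => (zIter_lt_add_one f finv hab1 i).le)
    (fun i j hij => ?_) hη
  by_contra hnd
  exact (openArc_zIter_injective hfinv hα hf hab hab1).ne hij
    ((isWanderingArc_zIter hfinv hM hwand i).eq_of_not_disjoint
      (isWanderingArc_zIter hfinv hM hwand j) hnd)

end WanderingOrbit

theorem Function.Periodic.uniformContinuous_of_continuous {g : ℝ → ℝ} (hp : Periodic g 1)
    (hg : Continuous g) : UniformContinuous g := by
  have hlift : Continuous (hp.lift : AddCircle (1:ℝ) → ℝ) := continuous_quot_lift _ hg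
  exact (CompactSpace.uniformContinuous_of_continuous hlift).comp
    (AddSubgroup.normedMk (AddSubgroup.zmultiples (1:ℝ))).uniformContinuous

namespace CircleDiffeo

variable (f : CircleDiffeo)

theorem deriv_add_one (x : ℝ) : deriv f.toFun (x + 1) = deriv f.toFun x := by
  rw [← deriv_comp_add_const, funext f.commute_translation, deriv_add_const]

theorem continuous_log_deriv : Continuous fun x => Real.log (deriv f.toFun x) :=
  (f.contDiff.continuous_deriv le_rfl).log fun x => (f.deriv_pos x).ne'

theorem periodic_log_deriv : Periodic (fun x => Real.log (deriv f.toFun x)) 1 := fun x => by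
  simp only [deriv_add_one]

theorem exists_abs_log_deriv_sub_le :
    ∃ C, ∀ x y, |Real.log (deriv f.toFun x) - Real.log (deriv f.toFun y)| ≤ C := by
  obtain ⟨C, hC⟩ := Metric.isBounded_iff.1
    (f.periodic_log_deriv.isBounded_of_continuous one_ne_zero f.continuous_log_deriv)
  exact ⟨C, fun x y => hC (mem_range_self x) (mem_range_self y)⟩

end CircleDiffeo

section densityMap

open intervalIntegral

noncomputable def densityConst (φ : ℝ → ℝ) (u v : ℝ) : ℝ :=
  (v - u) / ∫ x in u..v, Real.exp (φ x)

noncomputable def densityMap (φ : ℝ → ℝ) (u v : ℝ) (w : ℝ) : ℝ :=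
  u + densityConst φ u v * ∫ x in u..w, Real.exp (φ x)

variable {φ : ℝ → ℝ} {u v : ℝ}

theorem integral_exp_pos (hφ : Continuous φ) (huv : u < v) :
    0 < ∫ x in u..v, Real.exp (φ x) :=
  intervalIntegral_pos_of_pos ((Real.continuous_exp.comp hφ).intervalIntegrable _ _)
    (fun _ => Real.exp_pos _) huv

theorem densityConst_pos (hφ : Continuous φ) (huv : u < v) : 0 < densityConst φ u v :=
  div_pos (sub_pos.2 huv) (integral_exp_pos hφ huv)

theorem hasDerivAt_densityMap (hφ : Continuous φ) (w : ℝ) :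
    HasDerivAt (densityMap φ u v) (densityConst φ u v * Real.exp (φ w)) w :=
  (((Real.continuous_exp.comp hφ).integral_hasStrictDerivAt u w).hasDerivAt.const_mul _).const_add u

theorem derivWithin_densityMap (hφ : Continuous φ) (huv : u < v) {w : ℝ} (hw : w ∈ Icc u v) :
    derivWithin (densityMap φ u v) (Icc u v) w = densityConst φ u v * Real.exp (φ w) :=
  (hasDerivAt_densityMap hφ w).hasDerivWithinAt.derivWithin (uniqueDiffOn_Icc huv w hw)

theorem contDiff_densityMap (hφ : Continuous φ) : ContDiff ℝ 1 (densityMap φ u v) := by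
  rw [contDiff_one_iff_deriv, funext fun w => (hasDerivAt_densityMap (u := u) (v := v) hφ w).deriv]
  exact ⟨fun w => (hasDerivAt_densityMap hφ w).differentiableAt, by fun_prop⟩

theorem strictMono_densityMap (hφ : Continuous φ) (huv : u < v) :
    StrictMono (densityMap φ u v) :=
  strictMono_of_hasDerivAt_pos (hasDerivAt_densityMap hφ) fun _ =>
    mul_pos (densityConst_pos hφ huv) (Real.exp_pos _)

theorem isIntervalDiffeo_densityMap (hφ : Continuous φ) (huv : u < v) :
    IsIntervalDiffeo (densityMap φ u v) u v where
  contDiffOn := (contDiff_densityMap hφ).contDiffOn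
  fix_left := by simp [densityMap]
  fix_right := by
    rw [densityMap, densityConst, div_mul_cancel₀ _ (integral_exp_pos hφ huv).ne', add_sub_cancel]
  mono := (strictMono_densityMap hφ huv).strictMonoOn _
  deriv_pos w hw := derivWithin_densityMap hφ huv hw ▸
    mul_pos (densityConst_pos hφ huv) (Real.exp_pos _)

theorem densityMap_zero (huv : u ≠ v) (w : ℝ) : densityMap 0 u v w = w := by
  have hne : v - u ≠ 0 := sub_ne_zero.2 huv.symm
  simp [densityMap, densityConst, hne]

end densityMap

/-- The derivative of `h₁ ∘ F ∘ h₀⁻¹` at the point `h₀ w`. -/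
noncomputable def conjDeriv (h₀ h₁ : ℝ → ℝ) (I₀ I₁ : Set ℝ) (F : ℝ → ℝ) (w : ℝ) : ℝ :=
  derivWithin h₁ I₁ (F w) * deriv F w / derivWithin h₀ I₀ w

theorem log_conjDeriv_densityMap_div {φ₀ φ₁ F : ℝ → ℝ} {u₀ v₀ u₁ v₁ : ℝ} (hφ₀ : Continuous φ₀)
    (hφ₁ : Continuous φ₁) (h₀ : u₀ < v₀) (h₁ : u₁ < v₁) (hF : ∀ x, 0 < deriv F x)
    {w₁ w₂ : ℝ} (hw₁ : w₁ ∈ Icc u₀ v₀) (hw₂ : w₂ ∈ Icc u₀ v₀) (hFw₁ : F w₁ ∈ Icc u₁ v₁)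
    (hFw₂ : F w₂ ∈ Icc u₁ v₁) :
    Real.log (conjDeriv (densityMap φ₀ u₀ v₀) (densityMap φ₁ u₁ v₁) (Icc u₀ v₀) (Icc u₁ v₁) F w₁ /
        conjDeriv (densityMap φ₀ u₀ v₀) (densityMap φ₁ u₁ v₁) (Icc u₀ v₀) (Icc u₁ v₁) F w₂) =
      (φ₁ (F w₁) + Real.log (deriv F w₁) - φ₀ w₁) -
        (φ₁ (F w₂) + Real.log (deriv F w₂) - φ₀ w₂) := by
  have hconj : ∀ w ∈ Icc u₀ v₀, F w ∈ Icc u₁ v₁ →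
      conjDeriv (densityMap φ₀ u₀ v₀) (densityMap φ₁ u₁ v₁) (Icc u₀ v₀) (Icc u₁ v₁) F w =
        densityConst φ₁ u₁ v₁ / densityConst φ₀ u₀ v₀ *
          Real.exp (φ₁ (F w) + Real.log (deriv F w) - φ₀ w) := fun w hw hFw => by
    rw [conjDeriv, derivWithin_densityMap hφ₁ h₁ hFw, derivWithin_densityMap hφ₀ h₀ hw,
      Real.exp_sub, Real.exp_add, Real.exp_log (hF w)]
    field_simp
  have hc : densityConst φ₁ u₁ v₁ / densityConst φ₀ u₀ v₀ ≠ 0 :=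
    (div_pos (densityConst_pos hφ₁ h₁) (densityConst_pos hφ₀ h₀)).ne'
  rw [hconj w₁ hw₁ hFw₁, hconj w₂ hw₂ hFw₂, mul_div_mul_left _ _ hc, ← Real.exp_sub, Real.log_exp]

section potential

/-- The share of `log F'` on the interval `j` that is carried by the interval `i`. -/
noncomputable def rampWeight (n : ℕ) (i j : ℤ) : ℝ :=
  if -(n : ℤ) ≤ i ∧ i ≤ j then ((i : ℝ) + n) / ((j : ℝ) + n) else 0

variable {n : ℕ} {i j : ℤ}

theorem rampWeight_of_lt (h : j < i) : rampWeight n i j = 0 :=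
  if_neg fun hc => by omega

theorem rampWeight_of_le_neg (h : i ≤ -n) (j : ℤ) : rampWeight n i j = 0 := by
  unfold rampWeight
  split_ifs with hc
  · rw [show (i : ℝ) = -n by exact_mod_cast le_antisymm h hc.1, neg_add_cancel, zero_div]
  · rfl

theorem rampWeight_succ_sub_self (h : -(n : ℤ) < i) :
    rampWeight n (i + 1) i - rampWeight n i i = -1 := by
  have hpos : (0 : ℝ) < i + n := by exact_mod_cast (show (0 : ℤ) < i + n by omega)
  rw [rampWeight_of_lt (lt_add_one i), rampWeight, if_pos ⟨h.le, le_rfl⟩, div_self hpos.ne',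
    zero_sub]

theorem abs_rampWeight_succ_sub_le (hij : i ≠ j) (hj : -(n : ℤ) < j) :
    |rampWeight n (i + 1) j - rampWeight n i j| ≤ 1 / ((j : ℝ) + n) := by
  have hpos : (0 : ℝ) < j + n := by exact_mod_cast (show (0 : ℤ) < j + n by omega)
  rcases lt_or_gt_of_ne hij with hlt | hgt
  · by_cases hi : -(n : ℤ) ≤ i
    · rw [rampWeight, rampWeight, if_pos ⟨by omega, by omega⟩, if_pos ⟨hi, hlt.le⟩, ← sub_div]
      push_cast
      rw [show (i : ℝ) + 1 + n - (i + n) = 1 by ring, abs_of_pos (by positivity)]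
    · rw [rampWeight_of_le_neg (by omega), rampWeight_of_le_neg (by omega), sub_zero, abs_zero]
      positivity
  · rw [rampWeight_of_lt (by omega), rampWeight_of_lt hgt, sub_zero, abs_zero]
    positivity

/-- The logarithm of the derivative of the `i`-th conjugating map, up to an additive constant:
`ℓ` is the logarithm of the derivative of `F`, and the intervals in `B` are the long ones. -/
noncomputable def potential (F ℓ : ℝ → ℝ) (B : Finset ℤ) (n : ℕ) (i : ℤ) (w : ℝ) : ℝ :=
  ∑ j ∈ B, rampWeight n i j * ℓ (F^[(j - i).toNat] w)

variable {F ℓ : ℝ → ℝ} {B : Finset ℤ}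

theorem continuous_potential (hF : Continuous F) (hℓ : Continuous ℓ) (i : ℤ) :
    Continuous (potential F ℓ B n i) :=
  continuous_finsetSum _ fun _ _ => continuous_const.mul (hℓ.comp (hF.iterate _))

theorem potential_eq_zero (hB : ∀ j ∈ B, |j| < n) (hi : (n : ℤ) ≤ |i|) :
    potential F ℓ B n i = 0 := by
  funext w
  refine Finset.sum_eq_zero fun j hj => ?_
  have hj := abs_lt.1 (hB j hj)
  rcases abs_cases i with ⟨hi', -⟩ | ⟨hi', -⟩
  · rw [rampWeight_of_lt (by omega), zero_mul]
  · rw [rampWeight_of_le_neg (by omega), zero_mul]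

theorem potential_succ_apply_sub (i : ℤ) (w : ℝ) :
    potential F ℓ B n (i + 1) (F w) - potential F ℓ B n i w =
      ∑ j ∈ B, (rampWeight n (i + 1) j - rampWeight n i j) * ℓ (F^[(j - i).toNat] w) := by
  rw [potential, potential, ← Finset.sum_sub_distrib]
  refine Finset.sum_congr rfl fun j _ => ?_
  rcases lt_or_ge i j with h | h
  · rw [← Function.iterate_succ_apply, show (j - (i + 1)).toNat.succ = (j - i).toNat by omega]
    ring
  · rw [rampWeight_of_lt (show j < i + 1 by omega)]
    ring

/-- The logarithm of the derivative of `h_{i+1} ∘ F ∘ h_i⁻¹` at `h_i w`, up to an additive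
constant. -/
noncomputable def conjLogDeriv (F ℓ : ℝ → ℝ) (B : Finset ℤ) (n : ℕ) (i : ℤ) (w : ℝ) : ℝ :=
  potential F ℓ B n (i + 1) (F w) + ℓ w - potential F ℓ B n i w

theorem conjLogDeriv_sub_conjLogDeriv (hB : ∀ j ∈ B, -(n : ℤ) < j) (i : ℤ) (w₁ w₂ : ℝ) :
    conjLogDeriv F ℓ B n i w₁ - conjLogDeriv F ℓ B n i w₂ =
      (if i ∈ B then 0 else ℓ w₁ - ℓ w₂) +
        ∑ j ∈ B.erase i, (rampWeight n (i + 1) j - rampWeight n i j) *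
          (ℓ (F^[(j - i).toNat] w₁) - ℓ (F^[(j - i).toNat] w₂)) := by
  have hsum : conjLogDeriv F ℓ B n i w₁ - conjLogDeriv F ℓ B n i w₂ = (ℓ w₁ - ℓ w₂) +
      ∑ j ∈ B, (rampWeight n (i + 1) j - rampWeight n i j) *
        (ℓ (F^[(j - i).toNat] w₁) - ℓ (F^[(j - i).toNat] w₂)) := by
    simp only [conjLogDeriv, mul_sub, Finset.sum_sub_distrib, ← potential_succ_apply_sub]
    ring
  rw [hsum]
  split_ifs with hi
  · rw [← Finset.add_sum_erase _ _ hi, rampWeight_succ_sub_self (hB i hi)]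
    simp only [sub_self, Int.toNat_zero, Function.iterate_zero, id]
    ring
  · rw [Finset.erase_eq_of_notMem hi]

theorem abs_sum_rampWeight_succ_sub_mul_le {m : ℕ} {C : ℝ} (hm : m < n)
    (hB : ∀ j ∈ B, |j| ≤ m) (hℓ : ∀ x y, |ℓ x - ℓ y| ≤ C) (i : ℤ) (w₁ w₂ : ℝ) :
    |∑ j ∈ B.erase i, (rampWeight n (i + 1) j - rampWeight n i j) *
        (ℓ (F^[(j - i).toNat] w₁) - ℓ (F^[(j - i).toNat] w₂))| ≤ B.card * C / (n - m) := by
  have hnm : (0 : ℝ) < n - m := sub_pos.2 (by exact_mod_cast hm)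
  have hC : 0 ≤ C := (abs_nonneg _).trans (hℓ 0 0)
  have hweight : ∀ j ∈ B.erase i, |rampWeight n (i + 1) j - rampWeight n i j| ≤ 1 / (n - m) :=
    fun j hj => by
      obtain ⟨hji, hjB⟩ := Finset.mem_erase.1 hj
      have hjm : -(m : ℤ) ≤ j := (abs_le.1 (hB j hjB)).1
      refine (abs_rampWeight_succ_sub_le hji.symm (by omega)).trans
        (one_div_le_one_div_of_le hnm ?_)
      have : -(m : ℝ) ≤ j := by exact_mod_cast hjm
      linarith
  calc _ ≤ ∑ j ∈ B.erase i, |rampWeight n (i + 1) j - rampWeight n i j| *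
          |ℓ (F^[(j - i).toNat] w₁) - ℓ (F^[(j - i).toNat] w₂)| := by
        simpa only [abs_mul] using Finset.abs_sum_le_sum_abs (fun j =>
          (rampWeight n (i + 1) j - rampWeight n i j) *
            (ℓ (F^[(j - i).toNat] w₁) - ℓ (F^[(j - i).toNat] w₂))) (B.erase i)
    _ ≤ ∑ _j ∈ B.erase i, 1 / ((n : ℝ) - m) * C :=
        Finset.sum_le_sum fun j hj =>
          mul_le_mul (hweight j hj) (hℓ _ _) (abs_nonneg _) (by positivity)
    _ ≤ B.card * C / (n - m) := by
        rw [Finset.sum_const, nsmul_eq_mul, mul_comm (1 / _), ← mul_assoc, mul_one_div]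
        gcongr
        exact Finset.erase_subset i B

theorem abs_conjLogDeriv_sub_le {m : ℕ} {C δ : ℝ} (hm : m < n) (hB : ∀ j ∈ B, |j| ≤ m)
    (hℓ : ∀ x y, |ℓ x - ℓ y| ≤ C) (hn : B.card * C / (n - m) ≤ δ) {w₁ w₂ : ℝ}
    (hshort : i ∉ B → |ℓ w₁ - ℓ w₂| ≤ δ) :
    |conjLogDeriv F ℓ B n i w₁ - conjLogDeriv F ℓ B n i w₂| ≤ 2 * δ := by
  have hsum := (abs_sum_rampWeight_succ_sub_mul_le (F := F) hm hB hℓ i w₁ w₂).trans hn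
  rw [conjLogDeriv_sub_conjLogDeriv (fun j hj => by have := abs_le.1 (hB j hj); omega),
    two_mul]
  refine (abs_add_le _ _).trans (add_le_add ?_ hsum)
  split_ifs with hi
  · exact abs_zero.trans_le ((abs_nonneg _).trans hsum)
  · exact hshort hi

end potential

theorem exists_finset_of_finite_setOf_lt {u v : ℤ → ℝ}
    (hlong : ∀ η > 0, {j | η < v j - u j}.Finite) {η C δ : ℝ} (hη : 0 < η) (hδ : 0 < δ) :
    ∃ (B : Finset ℤ) (m n : ℕ), m < n ∧ (∀ j ∈ B, |j| ≤ m) ∧ B.card * C / (n - m) ≤ δ ∧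
      ∀ j ∉ B, v j - u j ≤ η := by
  set B := (hlong η hη).toFinset
  refine ⟨B, B.sup Int.natAbs, B.sup Int.natAbs + 1 + ⌈B.card * C / δ⌉₊, by omega,
    fun j hj => ?_, ?_, fun j hj => not_lt.1 fun hlt => hj ((Set.Finite.mem_toFinset _).2 hlt)⟩
  · rw [Int.abs_eq_natAbs]
    exact_mod_cast Finset.le_sup (f := Int.natAbs) hj
  · push_cast
    rw [add_assoc, add_sub_cancel_left, div_le_iff₀ (by positivity), ← div_le_iff₀' hδ]
    linarith [Nat.le_ceil (B.card * C / δ)]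

theorem CircleDiffeo.exists_conjugacy_distortion_le (f : CircleDiffeo) {u v : ℤ → ℝ}
    (huv : ∀ i, u i < v i) (hu : ∀ i, u (i + 1) = f.toFun (u i))
    (hv : ∀ i, v (i + 1) = f.toFun (v i)) (hlong : ∀ η > 0, {j | η < v j - u j}.Finite)
    {ε : ℝ} (hε : 0 < ε) :
    ∃ (n₀ : ℕ) (h : ℤ → ℝ → ℝ), (∀ i, IsIntervalDiffeo (h i) (u i) (v i)) ∧
      (∀ i : ℤ, (n₀ : ℤ) ≤ |i| → ∀ w ∈ Icc (u i) (v i), h i w = w) ∧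
      (∀ i : ℤ, ∀ w₁ ∈ Icc (u i) (v i), ∀ w₂ ∈ Icc (u i) (v i),
        Real.log
          (conjDeriv (h i) (h (i + 1)) (Icc (u i) (v i)) (Icc (u (i + 1)) (v (i + 1))) f.toFun w₁ /
            conjDeriv (h i) (h (i + 1)) (Icc (u i) (v i)) (Icc (u (i + 1)) (v (i + 1)))
              f.toFun w₂) ≤ ε) := by
  set ℓ := fun x => Real.log (deriv f.toFun x)
  obtain ⟨C, hC⟩ := f.exists_abs_log_deriv_sub_le
  obtain ⟨η, hη, hηℓ⟩ := Metric.uniformContinuous_iff.1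
    (f.periodic_log_deriv.uniformContinuous_of_continuous f.continuous_log_deriv) (ε / 2)
    (half_pos hε)
  obtain ⟨B, m, n, hmn, hB, hn, hBshort⟩ :=
    exists_finset_of_finite_setOf_lt hlong (half_pos hη) (C := C) (half_pos hε)
  set φ := potential f.toFun ℓ B n
  have hφ : ∀ i, Continuous (φ i) := continuous_potential f.continuous f.continuous_log_deriv
  refine ⟨n, fun i => densityMap (φ i) (u i) (v i),
    fun i => isIntervalDiffeo_densityMap (hφ i) (huv i), fun i hi w _ => ?_,
    fun i w₁ hw₁ w₂ hw₂ => ?_⟩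
  · change densityMap (potential f.toFun ℓ B n i) (u i) (v i) w = w
    rw [potential_eq_zero (fun j hj => by have := hB j hj; omega) hi, densityMap_zero (huv i).ne]
  have hmaps : ∀ w ∈ Icc (u i) (v i), f.toFun w ∈ Icc (u (i + 1)) (v (i + 1)) := fun w hw => by
    rw [hu, hv]
    exact ⟨f.strictMono.monotone hw.1, f.strictMono.monotone hw.2⟩
  have hshort : i ∉ B → |ℓ w₁ - ℓ w₂| ≤ ε / 2 := fun hi => by
    have hlen := hBshort i hi
    refine (hηℓ ?_).le
    rw [Real.dist_eq, abs_lt]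
    constructor <;> linarith [hw₁.1, hw₁.2, hw₂.1, hw₂.2]
  rw [log_conjDeriv_densityMap_div (hφ i) (hφ (i + 1)) (huv i) (huv (i + 1)) f.deriv_pos hw₁ hw₂
    (hmaps w₁ hw₁) (hmaps w₂ hw₂)]
  calc _ ≤ |_| := le_abs_self _
    _ ≤ 2 * (ε / 2) := abs_conjLogDeriv_sub_le hmn hB hC hn hshort
    _ = ε := by ring

/-- `h'_{i+1}(f w) · f'(w) / h'_i(w)` is the derivative of `h_{i+1} ∘ f ∘ h_i⁻¹` at `h_i(w)`. -/
theorem wandering_interval_conjugacy (α : ℝ) (hα : Irrational α)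
    (f : CircleDiffeo) (hf : hasRotationNumber f α)
    (finv : CircleDiffeo) (hfinv : ∀ z : ℝ, finv.toFun (f.toFun z) = z)
    (ε : ℝ) (hε : 0 < ε) (a b : ℝ) (hab : a < b) (hab1 : b < a + 1)
    (M : Set (AddCircle (1:ℝ))) (hM : IsMinimalSet f.proj M)
    (hwand : IsWanderingArc M a b) :
    ∃ (n₀ : ℕ) (h : ℤ → ℝ → ℝ),
      (∀ i : ℤ, IsIntervalDiffeo (h i)
        (zIter f.toFun finv.toFun i a) (zIter f.toFun finv.toFun i b)) ∧
      (∀ i : ℤ, (n₀ : ℤ) ≤ |i| →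
        ∀ w ∈ Set.Icc (zIter f.toFun finv.toFun i a) (zIter f.toFun finv.toFun i b),
          h i w = w) ∧
      (∀ i : ℤ,
        ∀ w₁ ∈ Set.Icc (zIter f.toFun finv.toFun i a) (zIter f.toFun finv.toFun i b),
        ∀ w₂ ∈ Set.Icc (zIter f.toFun finv.toFun i a) (zIter f.toFun finv.toFun i b),
          Real.log
            ((derivWithin (h (i + 1))
                (Set.Icc (zIter f.toFun finv.toFun (i + 1) a)
                  (zIter f.toFun finv.toFun (i + 1) b)) (f.toFun w₁) *
              deriv f.toFun w₁ /
              derivWithin (h i)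
                (Set.Icc (zIter f.toFun finv.toFun i a)
                  (zIter f.toFun finv.toFun i b)) w₁) /
            (derivWithin (h (i + 1))
                (Set.Icc (zIter f.toFun finv.toFun (i + 1) a)
                  (zIter f.toFun finv.toFun (i + 1) b)) (f.toFun w₂) *
              deriv f.toFun w₂ /
              derivWithin (h i)
                (Set.Icc (zIter f.toFun finv.toFun i a)
                  (zIter f.toFun finv.toFun i b)) w₂)) ≤ ε) :=
  f.exists_conjugacy_distortion_le (fun i => zIter_strictMono f.strictMono finv.strictMono i hab)
    (zIter_succ_of_inv hfinv · a) (zIter_succ_of_inv hfinv · b)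
    (fun _ hη => finite_setOf_lt_zIter_sub hfinv hα hf hab hab1 hM hwand hη) hε
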